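/- arXiv:2510.11440 — 6 statements merged into one kernel-verified Lean document; each statement's English description precedes it below -/
import Mathlib

section
/- Let ν and ‖·‖ be two norms on ℝ^n (equipped with the Euclidean inner product ⟨·,·⟩), let ν*(y) := sup{⟨y,s⟩ : s ∈ ℝ^n, ν(s) ≤ 1} be the dual norm of ν, and let ζ > 0 satisfy ‖u‖ ≤ ζ·ν(u) for all u ∈ ℝ^n. Let f : ℝ^n → ℝ be differentiable and bounded below, with f* := inf_{x∈ℝ^n} f(x) > -∞, and let M > 0. Suppose sequences x : ℕ → ℝ^n, d : ℕ → ℝ^n, t : ℕ → ℝ, Λ : ℕ → ℝ satisfy, for every k ∈ ℕ: (i) ν(d_k) = 1 and ⟨∇f(x_k), d_k⟩ = -ν*(∇f(x_k)); (ii) 0 < Λ_k ≤ M; (iii) t_k = ν*(∇f(x_k))/(Λ_k·‖d_k‖²); (iv) x_{k+1} = x_k + t_k·d_k; (v) f(x_{k+1}) ≤ f(x_k) + t_k·⟨∇f(x_k), d_k⟩ + (Λ_k/2)·t_k²·‖d_k‖². Then for every N ∈ ℕ, min_{0 ≤ k ≤ N} ν*(∇f(x_k))² ≤ 2·M·ζ²·(f(x_0)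 - f*)/(N+1). -/
open scoped RealInnerProductSpace

/-- The dual norm `ν*(y) = sup {⟨y, s⟩ : ν s ≤ 1}` of a norm `ν` on `ℝⁿ`. -/
noncomputable def dualNorm {n : ℕ} (ν : EuclideanSpace ℝ (Fin n) → ℝ)
    (y : EuclideanSpace ℝ (Fin n)) : ℝ :=
  sSup {r : ℝ | ∃ s : EuclideanSpace ℝ (Fin n), ν s ≤ 1 ∧ r = ⟪y, s⟫}

/-- Unconstrained non-convex convergence rate of Adaptive
Conditional Gradient Descent (Normalized Steepest Descent variant):
`min_{0 ≤ k ≤ N} ν*(∇f(x_k))² ≤ 2·M·ζ²·(f(x_0) - f*)/(N+1)`. -/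
theorem acgd_unconstrained_nonconvex_rate {n : ℕ}
    (ν nrm : EuclideanSpace ℝ (Fin n) → ℝ)
    (hν_add : ∀ u v, ν (u + v) ≤ ν u + ν v)
    (hν_smul : ∀ (a : ℝ) (u : EuclideanSpace ℝ (Fin n)), ν (a • u) = |a| * ν u)
    (hν_eq0 : ∀ u, ν u = 0 ↔ u = 0)
    (hnrm_add : ∀ u v, nrm (u + v) ≤ nrm u + nrm v)
    (hnrm_smul : ∀ (a : ℝ) (u : EuclideanSpace ℝ (Fin n)), nrm (a • u) = |a| * nrm u)
    (hnrm_eq0 : ∀ u, nrm u = 0 ↔ u = 0)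
    (ζ : ℝ) (hζ : 0 < ζ) (hζle : ∀ u, nrm u ≤ ζ * ν u)
    (f : EuclideanSpace ℝ (Fin n) → ℝ)
    (f' : EuclideanSpace ℝ (Fin n) → EuclideanSpace ℝ (Fin n))
    (hf : ∀ y, HasGradientAt f (f' y) y)
    (fstar : ℝ) (hfstar : IsGLB (Set.range f) fstar)
    (M : ℝ) (hM : 0 < M)
    (x d : ℕ → EuclideanSpace ℝ (Fin n)) (t Λ : ℕ → ℝ)
    (hd_norm : ∀ k, ν (d k) = 1)
    (hd_lmo : ∀ k, ⟪f' (x k), d k⟫ = -(dualNorm ν (f' (x k))))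
    (hΛ : ∀ k, 0 < Λ k ∧ Λ k ≤ M)
    (ht : ∀ k, t k = dualNorm ν (f' (x k)) / (Λ k * nrm (d k) ^ 2))
    (hx : ∀ k, x (k + 1) = x k + t k • d k)
    (hdec : ∀ k, f (x (k + 1)) ≤
      f (x k) + t k * ⟪f' (x k), d k⟫ + Λ k / 2 * t k ^ 2 * nrm (d k) ^ 2) :
    ∀ N : ℕ, ∃ k ≤ N,
      dualNorm ν (f' (x k)) ^ 2 ≤ 2 * M * ζ ^ 2 * (f (x 0) - fstar) / ((N : ℝ) + 1) := by
  intro N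
  by_contra hcon
  push_neg at hcon
  set g : ℕ → ℝ := fun k => dualNorm ν (f' (x k)) with hg
  have hmz : (0:ℝ) < 2 * M * ζ ^ 2 := by positivity
  have hN1 : (0:ℝ) < (N : ℝ) + 1 := by positivity
  set D : ℝ := (f (x 0) - fstar) / ((N : ℝ) + 1) with hD
  have hnrm0 : nrm 0 = 0 := (hnrm_eq0 0).mpr rfl
  have hnrm_nonneg : ∀ u, 0 ≤ nrm u := by
    intro u
    have h1 := hnrm_add u (-u)
    have h2 : nrm (-u) = nrm u := by simpa using hnrm_smul (-1) u
    rw [add_neg_cancel, hnrm0, h2] at h1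
    linarith
  have hdpos : ∀ k, 0 < nrm (d k) := by
    intro k
    rcases lt_or_eq_of_le (hnrm_nonneg (d k)) with h' | h'
    · exact h'
    · exfalso
      have hd0 : d k = 0 := (hnrm_eq0 _).mp h'.symm
      have := hd_norm k
      rw [hd0, (hν_eq0 0).mpr rfl] at this
      norm_num at this
  have step : ∀ k, f (x (k + 1)) ≤ f (x k) - g k ^ 2 / (2 * M * ζ ^ 2) := by
    intro k
    obtain ⟨hΛpos, hΛM⟩ := hΛ k
    have hs := hdpos k
    have hsζ : nrm (d k) ≤ ζ := by
      have := hζle (d k)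
      rw [hd_norm k] at this
      linarith
    have hd := hdec k
    rw [hd_lmo k, ht k] at hd
    have hΛne : Λ k ≠ 0 := ne_of_gt hΛpos
    have hsne : nrm (d k) ≠ 0 := ne_of_gt hs
    have key : (g k / (Λ k * nrm (d k) ^ 2)) * (-(g k)) +
        Λ k / 2 * (g k / (Λ k * nrm (d k) ^ 2)) ^ 2 * nrm (d k) ^ 2
        = -(g k ^ 2 / (2 * Λ k * nrm (d k) ^ 2)) := by
      field_simp
      ring
    have h1 : f (x (k + 1)) ≤ f (x k) - g k ^ 2 / (2 * Λ k * nrm (d k) ^ 2) := by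
      linarith [hd, key]
    have h2 : g k ^ 2 / (2 * M * ζ ^ 2) ≤ g k ^ 2 / (2 * Λ k * nrm (d k) ^ 2) := by
      apply div_le_div_of_nonneg_left (sq_nonneg _) (by positivity) (by nlinarith [mul_le_mul hsζ hsζ hs.le hζ.le, mul_le_mul hΛM (le_refl ((nrm (d k))^2)) (sq_nonneg _) hM.le])
    linarith
  have step' : ∀ k ≤ N, f (x (k + 1)) < f (x k) - D := by
    intro k hk
    have hB := hcon k hk
    have : D < g k ^ 2 / (2 * M * ζ ^ 2) := by
      rw [lt_div_iff₀ hmz]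
      calc D * (2 * M * ζ ^ 2) = 2 * M * ζ ^ 2 * (f (x 0) - fstar) / ((N : ℝ) + 1) := by
            rw [hD]; field_simp
        _ < g k ^ 2 := hB
    linarith [step k]
  have hind : ∀ j ≤ N, f (x (j + 1)) < f (x 0) - ((j : ℝ) + 1) * D := by
    intro j
    induction j with
    | zero => intro hj; have := step' 0 (Nat.zero_le N); push_cast; linarith
    | succ m ih =>
      intro hj
      have h1 := ih (Nat.le_of_succ_le hj)
      have h2 := step' (m + 1) hj
      push_cast at h1 ⊢
      linarith
  have hfin := hind N le_rfl
  have hND : ((N : ℝ) + 1) * D = f (x 0) - fstar := by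
    rw [hD]; field_simp
  have hlb : fstar ≤ f (x (N + 1)) := hfstar.1 (Set.mem_range_self _)
  linarith
end

section
/- Let ν and ‖·‖ be two norms on ℝ^n (equipped with the Euclidean inner product ⟨·,·⟩), let ν*(y) := sup{⟨y,s⟩ : s ∈ ℝ^n, ν(s) ≤ 1} be the dual norm of ν, and let ζ > 0 satisfy ‖u‖ ≤ ζ·ν(u) for all u ∈ ℝ^n. Let f : ℝ^n → ℝ be differentiable with a global minimizer x* and minimal value f* := f(x*), and assume f is η-quasar-convex with respect to x* for some η ∈ (0,1], i.e., f(x*) - f(y) ≥ (1/η)·⟨∇f(y), x* - y⟩ for all y ∈ ℝ^n. Let M > 0, and let R ≥ 1 satisfy ν(x - x*) ≤ R for every x with f(x) ≤ f(x_0). Suppose f(x_0) > f*, and suppose sequences x : ℕ → ℝ^n, d : ℕ → ℝ^n, t : ℕ → ℝ, Λ : ℕ → ℝ satisfy, for every k ∈ ℕ: (i) ν(d_k) = 1 and ⟨∇f(x_k), d_k⟩ = -ν*(∇f(x_k)); (ii) 0 < Λ_k ≤ M; (iii) t_k = ν*(∇f(x_k))/(Λ_k·‖d_k‖²); (iv)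 x_{k+1} = x_k + t_k·d_k; (v) f(x_{k+1}) ≤ f(x_k) + t_k·⟨∇f(x_k), d_k⟩ + (Λ_k/2)·t_k²·‖d_k‖². Then for every N ≥ 1, f(x_N) - f* ≤ 2·M·ζ²·R² / ( 2·M·ζ²·R²/(f(x_0) - f*) + N·η² ). -/
open scoped RealInnerProductSpace

section AuxLemmas

variable {n : ℕ}

lemma nu_zero (ν : EuclideanSpace ℝ (Fin n) → ℝ)
    (hs : ∀ (a : ℝ) u, ν (a • u) = |a| * ν u) : ν 0 = 0 := by
  have := hs 0 0; simpa using this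

lemma nu_nonneg (ν : EuclideanSpace ℝ (Fin n) → ℝ)
    (ha : ∀ u v, ν (u + v) ≤ ν u + ν v)
    (hs : ∀ (a : ℝ) u, ν (a • u) = |a| * ν u) : ∀ u, 0 ≤ ν u := by
  intro u
  have hneg : ν (-u) = ν u := by
    have := hs (-1) u; simpa using this
  have h := ha u (-u)
  rw [add_neg_cancel, nu_zero ν hs, hneg] at h
  linarith

lemma nu_sum_le (ν : EuclideanSpace ℝ (Fin n) → ℝ)
    (ha : ∀ u v, ν (u + v) ≤ ν u + ν v)
    (hs : ∀ (a : ℝ) u, ν (a • u) = |a| * ν u)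
    {ι : Type*} (S : Finset ι) (g : ι → EuclideanSpace ℝ (Fin n)) :
    ν (∑ i ∈ S, g i) ≤ ∑ i ∈ S, ν (g i) := by
  classical
  induction S using Finset.induction with
  | empty => simp [nu_zero ν hs]
  | @insert a s hnotmem ih =>
    rw [Finset.sum_insert hnotmem, Finset.sum_insert hnotmem]
    exact le_trans (ha _ _) (by linarith)

/-- Every norm on Euclidean space dominates the Euclidean norm up to a constant. -/
lemma norm_le_const_mul_nu (ν : EuclideanSpace ℝ (Fin n) → ℝ)
    (ha : ∀ u v, ν (u + v) ≤ ν u + ν v)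
    (hs : ∀ (a : ℝ) u, ν (a • u) = |a| * ν u)
    (he : ∀ u, ν u = 0 ↔ u = 0) :
    ∃ C > 0, ∀ u, ‖u‖ ≤ C * ν u := by
  classical
  rcases isEmpty_or_nonempty (Fin n) with hE | hE
  · refine ⟨1, one_pos, fun u => ?_⟩
    have hu : u = 0 := Subsingleton.elim u 0
    simp [hu, nu_zero ν hs]
  -- ν is Lipschitz w.r.t. the Euclidean norm
  set B : ℝ := ∑ i : Fin n, ν (EuclideanSpace.single i (1:ℝ)) with hB
  have hdecomp : ∀ w : EuclideanSpace ℝ (Fin n),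
      w = ∑ i : Fin n, (w i) • EuclideanSpace.single i (1:ℝ) := by
    intro w
    have hb := (EuclideanSpace.basisFun (Fin n) ℝ).sum_repr w
    simp only [EuclideanSpace.basisFun_repr, EuclideanSpace.basisFun_apply] at hb
    exact hb.symm
  have habs : ∀ (w : EuclideanSpace ℝ (Fin n)) (i : Fin n), |w i| ≤ ‖w‖ := by
    intro w i
    have h1 : ⟪EuclideanSpace.single i (1:ℝ), w⟫ = w i := by
      simp [EuclideanSpace.inner_single_left]
    have h2 := abs_real_inner_le_norm (EuclideanSpace.single i (1:ℝ)) w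
    rw [h1, EuclideanSpace.norm_single] at h2
    simpa using h2
  have hup : ∀ w : EuclideanSpace ℝ (Fin n), ν w ≤ B * ‖w‖ := by
    intro w
    calc ν w = ν (∑ i : Fin n, (w i) • EuclideanSpace.single i (1:ℝ)) := by
            rw [← hdecomp]
      _ ≤ ∑ i : Fin n, ν ((w i) • EuclideanSpace.single i (1:ℝ)) :=
            nu_sum_le ν ha hs _ _
      _ = ∑ i : Fin n, |w i| * ν (EuclideanSpace.single i (1:ℝ)) := by
            simp [hs]
      _ ≤ ∑ i : Fin n, ‖w‖ * ν (EuclideanSpace.single i (1:ℝ)) := by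
            apply Finset.sum_le_sum
            intro i _
            exact mul_le_mul_of_nonneg_right (habs w i) (nu_nonneg ν ha hs _)
      _ = B * ‖w‖ := by rw [hB, Finset.sum_mul]; exact Finset.sum_congr rfl (by intros; ring)
  have hcont : Continuous ν := by
    have hlip : LipschitzWith (Real.toNNReal B) ν := by
      apply LipschitzWith.of_dist_le_mul
      intro u v
      have h1 : ν u - ν v ≤ ν (u - v) := by
        have := ha (u - v) v; simpa using this
      have h2 : ν v - ν u ≤ ν (u - v) := by
        have h3 := ha (v - u) u
        have h4 : ν (v - u) = ν (u - v) := by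
          have := hs (-1) (u - v); simpa [neg_sub] using this
        simp only [sub_add_cancel] at h3
        linarith
      have h5 : ν (u - v) ≤ B * ‖u - v‖ := hup _
      have hBnn : 0 ≤ B := Finset.sum_nonneg fun i _ => nu_nonneg ν ha hs _
      rw [Real.dist_eq, dist_eq_norm]
      rw [Real.coe_toNNReal B hBnn]
      rw [abs_sub_le_iff]
      constructor <;> linarith
    exact hlip.continuous
  -- minimum on the sphere
  obtain ⟨i⟩ := hE
  have hsph : (Metric.sphere (0 : EuclideanSpace ℝ (Fin n)) 1).Nonempty := by
    refine ⟨EuclideanSpace.single i (1:ℝ), ?_⟩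
    simp [EuclideanSpace.norm_single]
  obtain ⟨m, hm_mem, hm_min⟩ :=
    (isCompact_sphere (0 : EuclideanSpace ℝ (Fin n)) 1).exists_isMinOn hsph
      hcont.continuousOn
  have hm_norm : ‖m‖ = 1 := by simpa using hm_mem
  have hm_pos : 0 < ν m := by
    rcases lt_or_eq_of_le (nu_nonneg ν ha hs m) with h | h
    · exact h
    · exfalso
      have : m = 0 := (he m).mp h.symm
      rw [this] at hm_norm; simp at hm_norm
  refine ⟨(ν m)⁻¹, inv_pos.mpr hm_pos, fun u => ?_⟩
  rcases eq_or_ne u 0 with rfl | hu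
  · simp [nu_zero ν hs]
  · have hnu : 0 < ‖u‖ := norm_pos_iff.mpr hu
    have hmem : ‖u‖⁻¹ • u ∈ Metric.sphere (0 : EuclideanSpace ℝ (Fin n)) 1 := by
      simp [norm_smul, abs_of_pos (inv_pos.mpr hnu), inv_mul_cancel₀ hnu.ne']
    have h1 : ν m ≤ ν (‖u‖⁻¹ • u) := hm_min hmem
    have h2 : ν (‖u‖⁻¹ • u) = ‖u‖⁻¹ * ν u := by
      rw [hs, abs_of_pos (inv_pos.mpr hnu)]
    rw [h2] at h1
    have h3 : ‖u‖ * ν m ≤ ν u := by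
      have := mul_le_mul_of_nonneg_left h1 hnu.le
      rwa [← mul_assoc, mul_inv_cancel₀ hnu.ne', one_mul] at this
    calc ‖u‖ = (ν m)⁻¹ * (‖u‖ * ν m) := by field_simp
      _ ≤ (ν m)⁻¹ * ν u := mul_le_mul_of_nonneg_left h3 (inv_pos.mpr hm_pos).le



variable {n : ℕ} {ν : EuclideanSpace ℝ (Fin n) → ℝ} {C : ℝ}

lemma dual_bddAbove (hC : 0 < C) (hCle : ∀ u, ‖u‖ ≤ C * ν u)
    (y : EuclideanSpace ℝ (Fin n)) :
    BddAbove {r : ℝ | ∃ s : EuclideanSpace ℝ (Fin n), ν s ≤ 1 ∧ r = ⟪y, s⟫} := by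
  refine ⟨‖y‖ * C, fun r hr => ?_⟩
  obtain ⟨s, hs, rfl⟩ := hr
  have h1 : ⟪y, s⟫ ≤ ‖y‖ * ‖s‖ := real_inner_le_norm y s
  have h2 : ‖s‖ ≤ C * ν s := hCle s
  have h3 : C * ν s ≤ C * 1 := mul_le_mul_of_nonneg_left hs hC.le
  nlinarith [norm_nonneg y]

lemma dualNorm_nonneg (hν0 : ν 0 = 0) (hC : 0 < C) (hCle : ∀ u, ‖u‖ ≤ C * ν u)
    (y : EuclideanSpace ℝ (Fin n)) : 0 ≤ dualNorm ν y := by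
  apply le_csSup (dual_bddAbove hC hCle y)
  exact ⟨0, by simp [hν0]⟩

lemma inner_le_dualNorm (hsm : ∀ (a : ℝ) u, ν (a • u) = |a| * ν u)
    (hnn : ∀ u, 0 ≤ ν u) (heq : ∀ u, ν u = 0 ↔ u = 0)
    (hC : 0 < C) (hCle : ∀ u, ‖u‖ ≤ C * ν u)
    (y s : EuclideanSpace ℝ (Fin n)) :
    ⟪y, s⟫ ≤ dualNorm ν y * ν s := by
  rcases eq_or_lt_of_le (hnn s) with h | h
  · have hs0 : s = 0 := (heq s).mp h.symm
    have h00 : ν (0 : EuclideanSpace ℝ (Fin n)) = 0 := (heq 0).mpr rfl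
    simp [hs0, h00]
  · have hmem : ⟪y, (ν s)⁻¹ • s⟫ ∈
        {r : ℝ | ∃ u : EuclideanSpace ℝ (Fin n), ν u ≤ 1 ∧ r = ⟪y, u⟫} := by
      refine ⟨(ν s)⁻¹ • s, ?_, rfl⟩
      rw [hsm, abs_of_pos (inv_pos.mpr h), inv_mul_cancel₀ h.ne']
    have hle : ⟪y, (ν s)⁻¹ • s⟫ ≤ dualNorm ν y :=
      le_csSup (dual_bddAbove hC hCle y) hmem
    have h2 : ⟪y, (ν s)⁻¹ • s⟫ = (ν s)⁻¹ * ⟪y, s⟫ := real_inner_smul_right y s _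
    rw [h2] at hle
    have := mul_le_mul_of_nonneg_left hle h.le
    rw [← mul_assoc, mul_inv_cancel₀ h.ne', one_mul] at this
    linarith [this]

/-- Standard recursion `e(k+1) ≤ e k - c·(e k)²` gives the `1/N` rate. -/
lemma rate_of_rec (e : ℕ → ℝ) (c : ℝ) (hc : 0 < c) (he0 : 0 < e 0)
    (hnn : ∀ k, 0 ≤ e k) (hrec : ∀ k, e (k + 1) ≤ e k - c * e k ^ 2) :
    ∀ N : ℕ, e N ≤ 1 / (1 / e 0 + N * c) := by
  have key : ∀ N : ℕ, e N = 0 ∨ (0 < e N ∧ 1 / e 0 + N * c ≤ 1 / e N) := by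
    intro N
    induction N with
    | zero => exact Or.inr ⟨he0, by simp⟩
    | succ N ih =>
      rcases ih with h | ⟨hpos, hih⟩
      · left
        have h1 := hrec N
        rw [h] at h1
        simp at h1
        linarith [hnn (N + 1)]
      · rcases eq_or_lt_of_le (hnn (N + 1)) with h | h
        · exact Or.inl h.symm
        · right
          refine ⟨h, ?_⟩
          have hr := hrec N
          have hab : e (N + 1) ≤ e N := by nlinarith [sq_nonneg (e N)]
          have h1 : e (N + 1) * (1 + c * e N) ≤ e N := by
            nlinarith [mul_nonneg (mul_nonneg hc.le hpos.le)
              (sub_nonneg.mpr hab)]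
          have h2 : (1 + c * e N) / e N ≤ 1 / e (N + 1) := by
            rw [div_le_div_iff₀ hpos h]; nlinarith
          have h3 : (1 + c * e N) / e N = 1 / e N + c := by field_simp
          rw [h3] at h2
          calc 1 / e 0 + (↑(N + 1) : ℝ) * c = (1 / e 0 + N * c) + c := by
                push_cast; ring
            _ ≤ 1 / e N + c := by linarith
            _ ≤ 1 / e (N + 1) := h2
  intro N
  have hden : 0 < 1 / e 0 + N * c := by
    have : 0 < 1 / e 0 := by positivity
    have : 0 ≤ (N : ℝ) * c := by positivity
    linarith [one_div_pos.mpr he0]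
  rcases key N with h | ⟨hpos, hle⟩
  · rw [h]; positivity
  · have h1 := mul_le_mul_of_nonneg_left hle hpos.le
    rw [mul_one_div, div_self hpos.ne'] at h1
    rw [le_div_iff₀ hden]
    linarith


end AuxLemmas

/-- Unconstrained quasar-convex convergence rate of Adaptive
Conditional Gradient Descent (Normalized Steepest Descent variant):
`f(x_N) - f* ≤ 2Mζ²R² / (2Mζ²R²/(f(x_0) - f*) + N·η²)` for every `N ≥ 1`. -/
theorem acgd_unconstrained_quasar_rate {n : ℕ}
    (ν nrm : EuclideanSpace ℝ (Fin n) → ℝ)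
    (hν_add : ∀ u v, ν (u + v) ≤ ν u + ν v)
    (hν_smul : ∀ (a : ℝ) (u : EuclideanSpace ℝ (Fin n)), ν (a • u) = |a| * ν u)
    (hν_eq0 : ∀ u, ν u = 0 ↔ u = 0)
    (hnrm_add : ∀ u v, nrm (u + v) ≤ nrm u + nrm v)
    (hnrm_smul : ∀ (a : ℝ) (u : EuclideanSpace ℝ (Fin n)), nrm (a • u) = |a| * nrm u)
    (hnrm_eq0 : ∀ u, nrm u = 0 ↔ u = 0)
    (ζ : ℝ) (hζ : 0 < ζ) (hζle : ∀ u, nrm u ≤ ζ * ν u)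
    (f : EuclideanSpace ℝ (Fin n) → ℝ)
    (f' : EuclideanSpace ℝ (Fin n) → EuclideanSpace ℝ (Fin n))
    (hf : ∀ y, HasGradientAt f (f' y) y)
    (xstar : EuclideanSpace ℝ (Fin n)) (hmin : ∀ y, f xstar ≤ f y)
    (η : ℝ) (hη : η ∈ Set.Ioc (0 : ℝ) 1)
    (hquasar : ∀ y, f xstar - f y ≥ (1 / η) * ⟪f' y, xstar - y⟫)
    (M : ℝ) (hM : 0 < M)
    (x d : ℕ → EuclideanSpace ℝ (Fin n)) (t Λ : ℕ → ℝ)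
    (R : ℝ) (hR1 : 1 ≤ R)
    (hR : ∀ z : EuclideanSpace ℝ (Fin n), f z ≤ f (x 0) → ν (z - xstar) ≤ R)
    (h0 : f (x 0) > f xstar)
    (hd_norm : ∀ k, ν (d k) = 1)
    (hd_lmo : ∀ k, ⟪f' (x k), d k⟫ = -(dualNorm ν (f' (x k))))
    (hΛ : ∀ k, 0 < Λ k ∧ Λ k ≤ M)
    (ht : ∀ k, t k = dualNorm ν (f' (x k)) / (Λ k * nrm (d k) ^ 2))
    (hx : ∀ k, x (k + 1) = x k + t k • d k)
    (hdec : ∀ k, f (x (k + 1)) ≤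
      f (x k) + t k * ⟪f' (x k), d k⟫ + Λ k / 2 * t k ^ 2 * nrm (d k) ^ 2) :
    ∀ N : ℕ, 1 ≤ N →
      f (x N) - f xstar ≤
        2 * M * ζ ^ 2 * R ^ 2 /
          (2 * M * ζ ^ 2 * R ^ 2 / (f (x 0) - f xstar) + (N : ℝ) * η ^ 2) := by
  obtain ⟨hη0, hη1⟩ := hη
  obtain ⟨C, hC, hCle⟩ := norm_le_const_mul_nu ν hν_add hν_smul hν_eq0
  have hν0 : ν 0 = 0 := nu_zero ν hν_smul
  have hνnn := nu_nonneg ν hν_add hν_smul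
  have hnrmnn := nu_nonneg nrm hnrm_add hnrm_smul
  have hgnn : ∀ k, 0 ≤ dualNorm ν (f' (x k)) :=
    fun k => dualNorm_nonneg hν0 hC hCle _
  have hRpos : (0 : ℝ) < R := lt_of_lt_of_le one_pos hR1
  have hdk_pos : ∀ k, 0 < nrm (d k) := by
    intro k
    rcases eq_or_lt_of_le (hnrmnn (d k)) with h | h
    · exfalso
      have hd0 : d k = 0 := (hnrm_eq0 (d k)).mp h.symm
      have := hd_norm k
      rw [hd0, hν0] at this
      norm_num at this
    · exact h
  have hdk_le : ∀ k, nrm (d k) ≤ ζ := by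
    intro k
    have := hζle (d k)
    rwa [hd_norm k, mul_one] at this
  -- main per-step decrease
  have hstep : ∀ k, f (x (k + 1)) ≤
      f (x k) - dualNorm ν (f' (x k)) ^ 2 / (2 * M * ζ ^ 2) := by
    intro k
    have h := hdec k
    rw [hd_lmo k, ht k] at h
    set G := dualNorm ν (f' (x k)) with hG
    obtain ⟨hΛpos, hΛle⟩ := hΛ k
    have hnd := hdk_pos k
    have heqn : f (x k) + G / (Λ k * nrm (d k) ^ 2) * (-G) +
        Λ k / 2 * (G / (Λ k * nrm (d k) ^ 2)) ^ 2 * nrm (d k) ^ 2 =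
        f (x k) - G ^ 2 / (2 * (Λ k * nrm (d k) ^ 2)) := by
      field_simp
      ring
    rw [heqn] at h
    have hAle : Λ k * nrm (d k) ^ 2 ≤ M * ζ ^ 2 := by
      have h1 : nrm (d k) ^ 2 ≤ ζ ^ 2 := by nlinarith [hdk_le k, hnd]
      nlinarith
    have hApos : 0 < Λ k * nrm (d k) ^ 2 := by positivity
    have hdiv : G ^ 2 / (2 * (M * ζ ^ 2)) ≤ G ^ 2 / (2 * (Λ k * nrm (d k) ^ 2)) := by
      apply div_le_div_of_nonneg_left (sq_nonneg G) (by positivity) (by linarith)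
    have h2 : (2 : ℝ) * (M * ζ ^ 2) = 2 * M * ζ ^ 2 := by ring
    rw [h2] at hdiv
    linarith
  have hmono : ∀ k, f (x (k + 1)) ≤ f (x k) := by
    intro k
    have h1 : 0 ≤ dualNorm ν (f' (x k)) ^ 2 / (2 * M * ζ ^ 2) := by positivity
    linarith [hstep k]
  have hsub : ∀ k, f (x k) ≤ f (x 0) := by
    intro k
    induction k with
    | zero => exact le_refl _
    | succ k ih => exact le_trans (hmono k) ih
  have hRk : ∀ k, ν (x k - xstar) ≤ R := fun k => hR _ (hsub k)
  have hek_nn : ∀ k, 0 ≤ f (x k) - f xstar := fun k => sub_nonneg.mpr (hmin _)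
  have hqb : ∀ k, η * (f (x k) - f xstar) ≤ dualNorm ν (f' (x k)) * R := by
    intro k
    have hq := hquasar (x k)
    have hinner : ⟪f' (x k), xstar - x k⟫ = -⟪f' (x k), x k - xstar⟫ := by
      rw [show xstar - x k = -(x k - xstar) by abel, inner_neg_right]
    rw [hinner] at hq
    have h1 : f (x k) - f xstar ≤ (1 / η) * ⟪f' (x k), x k - xstar⟫ := by linarith
    have h2 : ⟪f' (x k), x k - xstar⟫ ≤ dualNorm ν (f' (x k)) * ν (x k - xstar) :=
      inner_le_dualNorm hν_smul hνnn hν_eq0 hC hCle _ _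
    have h3 : dualNorm ν (f' (x k)) * ν (x k - xstar) ≤ dualNorm ν (f' (x k)) * R :=
      mul_le_mul_of_nonneg_left (hRk k) (hgnn k)
    have h4 : f (x k) - f xstar ≤ (1 / η) * (dualNorm ν (f' (x k)) * R) := by
      calc f (x k) - f xstar ≤ (1 / η) * ⟪f' (x k), x k - xstar⟫ := h1
        _ ≤ (1 / η) * (dualNorm ν (f' (x k)) * R) := by
            apply mul_le_mul_of_nonneg_left _ (by positivity)
            linarith
    have h5 := mul_le_mul_of_nonneg_left h4 hη0.le
    rw [← mul_assoc, mul_one_div, div_self hη0.ne', one_mul] at h5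
    exact h5
  -- the error recursion
  set e : ℕ → ℝ := fun k => f (x k) - f xstar with he
  set c : ℝ := η ^ 2 / (2 * M * ζ ^ 2 * R ^ 2) with hc
  have hcpos : 0 < c := by rw [hc]; positivity
  have hrec : ∀ k, e (k + 1) ≤ e k - c * e k ^ 2 := by
    intro k
    have hs := hstep k
    have hq := hqb k
    have hG2 : η ^ 2 * (f (x k) - f xstar) ^ 2 ≤ dualNorm ν (f' (x k)) ^ 2 * R ^ 2 := by
      nlinarith [mul_self_le_mul_self (mul_nonneg hη0.le (hek_nn k)) hq]
    have hpos2 : (0 : ℝ) < 2 * M * ζ ^ 2 := by positivity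
    have hkey : c * (f (x k) - f xstar) ^ 2 ≤
        dualNorm ν (f' (x k)) ^ 2 / (2 * M * ζ ^ 2) := by
      rw [hc, div_mul_eq_mul_div, div_le_div_iff₀ (by positivity) (by positivity)]
      nlinarith [mul_le_mul_of_nonneg_right hG2 hpos2.le]
    simp only [he]
    linarith
  have hfinal := rate_of_rec e c hcpos (by simpa [he] using sub_pos.mpr h0)
    (fun k => hek_nn k) hrec
  intro N hN
  have hbound := hfinal N
  have he0pos : 0 < e 0 := by simpa [he] using sub_pos.mpr h0
  have hDpos : (0 : ℝ) < 2 * M * ζ ^ 2 * R ^ 2 := by positivity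
  have hden1 : 0 < 1 / e 0 + (N : ℝ) * c := by positivity
  have hden2 : 0 < 2 * M * ζ ^ 2 * R ^ 2 / (f (x 0) - f xstar) + (N : ℝ) * η ^ 2 := by
    have h1 : 0 < 2 * M * ζ ^ 2 * R ^ 2 / (f (x 0) - f xstar) := by
      apply div_pos hDpos (sub_pos.mpr h0)
    positivity
  have hkey : 1 / (1 / e 0 + (N : ℝ) * c) =
      2 * M * ζ ^ 2 * R ^ 2 /
        (2 * M * ζ ^ 2 * R ^ 2 / (f (x 0) - f xstar) + (N : ℝ) * η ^ 2) := by
    rw [div_eq_div_iff hden1.ne' hden2.ne', hc]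
    have he0 : e 0 = f (x 0) - f xstar := by simp [he]
    rw [he0]
    field_simp
  rw [hkey] at hbound
  exact hbound
end

section
/- Let ν and ‖·‖ be two norms on ℝ^n (equipped with the Euclidean inner product ⟨·,·⟩), let ν*(y) := sup{⟨y,s⟩ : s ∈ ℝ^n, ν(s) ≤ 1} be the dual norm of ν, and let ζ > 0 satisfy ‖u‖ ≤ ζ·ν(u) for all u ∈ ℝ^n. Let f : ℝ^n → ℝ be differentiable and attain its minimum value f*, let M > 0 and μ > 0 with μ ≤ M·ζ², and assume f satisfies the Polyak–Łojasiewicz inequality ν*(∇f(x))² ≥ 2μ·(f(x) - f*) for all x ∈ ℝ^n. Suppose sequences x : ℕ → ℝ^n, d : ℕ → ℝ^n, t : ℕ → ℝ, Λ : ℕ → ℝ satisfy, for every k ∈ ℕ: (i) ν(d_k) = 1 and ⟨∇f(x_k), d_k⟩ = -ν*(∇f(x_k)); (ii) 0 < Λ_k ≤ M; (iii) t_k = ν*(∇f(x_k))/(Λ_k·‖d_k‖²); (iv) x_{k+1} = x_k + t_k·d_k; (v) f(x_{k+1}) ≤ f(x_k) + t_k·⟨∇f(x_k), d_k⟩ +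 (Λ_k/2)·t_k²·‖d_k‖². Then for every N ∈ ℕ, f(x_N) - f* ≤ (1 - μ/(M·ζ²))^N · (f(x_0) - f*). -/
open scoped RealInnerProductSpace

/-- Unconstrained linear convergence rate of Adaptive Conditional
Gradient Descent under the Polyak–Łojasiewicz inequality:
`f(x_N) - f* ≤ (1 - μ/(M·ζ²))^N · (f(x_0) - f*)`. -/
theorem acgd_unconstrained_pl_rate {n : ℕ}
    (ν nrm : EuclideanSpace ℝ (Fin n) → ℝ)
    (hν_add : ∀ u v, ν (u + v) ≤ ν u + ν v)
    (hν_smul : ∀ (a : ℝ) (u : EuclideanSpace ℝ (Fin n)), ν (a • u) = |a| * ν u)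
    (hν_eq0 : ∀ u, ν u = 0 ↔ u = 0)
    (hnrm_add : ∀ u v, nrm (u + v) ≤ nrm u + nrm v)
    (hnrm_smul : ∀ (a : ℝ) (u : EuclideanSpace ℝ (Fin n)), nrm (a • u) = |a| * nrm u)
    (hnrm_eq0 : ∀ u, nrm u = 0 ↔ u = 0)
    (ζ : ℝ) (hζ : 0 < ζ) (hζle : ∀ u, nrm u ≤ ζ * ν u)
    (f : EuclideanSpace ℝ (Fin n) → ℝ)
    (f' : EuclideanSpace ℝ (Fin n) → EuclideanSpace ℝ (Fin n))
    (hf : ∀ y, HasGradientAt f (f' y) y)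
    (fstar : ℝ) (hfstar : IsLeast (Set.range f) fstar)
    (M μ : ℝ) (hM : 0 < M) (hμ : 0 < μ) (hμM : μ ≤ M * ζ ^ 2)
    (hPL : ∀ z : EuclideanSpace ℝ (Fin n), dualNorm ν (f' z) ^ 2 ≥ 2 * μ * (f z - fstar))
    (x d : ℕ → EuclideanSpace ℝ (Fin n)) (t Λ : ℕ → ℝ)
    (hd_norm : ∀ k, ν (d k) = 1)
    (hd_lmo : ∀ k, ⟪f' (x k), d k⟫ = -(dualNorm ν (f' (x k))))
    (hΛ : ∀ k, 0 < Λ k ∧ Λ k ≤ M)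
    (ht : ∀ k, t k = dualNorm ν (f' (x k)) / (Λ k * nrm (d k) ^ 2))
    (hx : ∀ k, x (k + 1) = x k + t k • d k)
    (hdec : ∀ k, f (x (k + 1)) ≤
      f (x k) + t k * ⟪f' (x k), d k⟫ + Λ k / 2 * t k ^ 2 * nrm (d k) ^ 2) :
    ∀ N : ℕ, f (x N) - fstar ≤ (1 - μ / (M * ζ ^ 2)) ^ N * (f (x 0) - fstar) := by

  have hν0 : ν 0 = 0 := (hν_eq0 0).mpr rfl
  have hnrm0 : nrm 0 = 0 := (hnrm_eq0 0).mpr rfl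
  have hnrm_nonneg : ∀ u, 0 ≤ nrm u := by
    intro u
    have h1 := hnrm_add u (-u)
    have h2 := hnrm_smul (-1) u
    simp only [neg_smul, one_smul, abs_neg, abs_one, one_mul] at h2
    rw [add_neg_cancel, hnrm0] at h1
    linarith
  have hdn_nonneg : ∀ y, 0 ≤ dualNorm ν y := by
    intro y
    unfold dualNorm
    by_cases hb : BddAbove {r : ℝ | ∃ s : EuclideanSpace ℝ (Fin n), ν s ≤ 1 ∧ r = ⟪y, s⟫}
    · exact le_csSup hb ⟨0, by rw [hν0]; norm_num, by simp⟩
    · rw [Real.sSup_of_not_bddAbove hb]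
  have hMζ : 0 < M * ζ ^ 2 := by positivity
  set c := μ / (M * ζ ^ 2) with hc
  have hc0 : 0 < c := by positivity
  have hc1 : c ≤ 1 := by rw [hc, div_le_one hMζ]; exact hμM
  have hΔ : ∀ z, 0 ≤ f z - fstar := fun z => sub_nonneg.mpr (hfstar.2 ⟨z, rfl⟩)
  have step : ∀ k, f (x (k + 1)) - fstar ≤ (1 - c) * (f (x k) - fstar) := by
    intro k
    set g := dualNorm ν (f' (x k)) with hg
    have hg0 : 0 ≤ g := hdn_nonneg _
    have hdk0 : d k ≠ 0 := by
      intro h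
      have h' := hd_norm k
      rw [h, hν0] at h'
      norm_num at h'
    have hs_pos : 0 < nrm (d k) :=
      lt_of_le_of_ne (hnrm_nonneg _) (fun h => hdk0 ((hnrm_eq0 _).mp h.symm))
    have hsζ : nrm (d k) ≤ ζ := by
      have := hζle (d k); rwa [hd_norm k, mul_one] at this
    obtain ⟨hΛ0, hΛM⟩ := hΛ k
    have hden_pos : 0 < 2 * Λ k * nrm (d k) ^ 2 := by positivity
    have key : t k * ⟪f' (x k), d k⟫ + Λ k / 2 * t k ^ 2 * nrm (d k) ^ 2
        = -(g ^ 2 / (2 * Λ k * nrm (d k) ^ 2)) := by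
      rw [hd_lmo k, ht k, ← hg]
      field_simp
      ring
    have h1 : f (x (k + 1)) ≤ f (x k) - g ^ 2 / (2 * Λ k * nrm (d k) ^ 2) := by
      have hd' := hdec k
      linarith [hdec k, key]
    have h2 : g ^ 2 / (2 * M * ζ ^ 2) ≤ g ^ 2 / (2 * Λ k * nrm (d k) ^ 2) := by
      apply div_le_div_of_nonneg_left (sq_nonneg g) hden_pos
      have : nrm (d k) ^ 2 ≤ ζ ^ 2 := by nlinarith
      nlinarith
    have h3 : 2 * μ * (f (x k) - fstar) ≤ g ^ 2 := hPL (x k)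
    have h4 : 2 * μ * (f (x k) - fstar) / (2 * M * ζ ^ 2) ≤ g ^ 2 / (2 * M * ζ ^ 2) :=
      div_le_div_of_nonneg_right h3 (by positivity)
    have heq : 2 * μ * (f (x k) - fstar) / (2 * M * ζ ^ 2) = c * (f (x k) - fstar) := by
      rw [hc]; field_simp
    have hexp : (1 - c) * (f (x k) - fstar) = (f (x k) - fstar) - c * (f (x k) - fstar) := by
      ring
    linarith
  intro N
  induction N with
  | zero => simp
  | succ N ih =>
    calc f (x (N + 1)) - fstar ≤ (1 - c) * (f (x N) - fstar) := step N
      _ ≤ (1 - c) * ((1 - c) ^ N * (f (x 0) - fstar)) :=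
          mul_le_mul_of_nonneg_left ih (by linarith)
      _ = (1 - c) ^ (N + 1) * (f (x 0) - fstar) := by ring
end

section
/- Let ‖·‖ be a norm on ℝ^n (equipped with the Euclidean inner product ⟨·,·⟩) with dual norm ‖y‖_* := sup{⟨y,s⟩ : ‖s‖ ≤ 1}. Let C ⊆ ℝ^n be a nonempty compact convex set with diameter D := max_{x,y∈C} ‖x - y‖, and let f : ℝ^n → ℝ be continuously differentiable with f* := min_{x∈C} f(x) and G := max_{x∈C} ‖∇f(x)‖_*. Let M > 0 and set Ĉ := max{M, 1, G}·(max{D, 1})². Suppose sequences x : ℕ → ℝ^n, v : ℕ → ℝ^n, t : ℕ → ℝ, Λ : ℕ → ℝ satisfy, for every k ∈ ℕ: (i) x_k ∈ C and v_k minimizes u ↦ ⟨∇f(x_k), u⟩ over C; (ii) with d_k := v_k - x_k and Gap_k := ⟨∇f(x_k), x_k - v_k⟩, one has 0 < Λ_k ≤ M and t_k = min{ Gap_k/(Λ_k·‖d_k‖²), 1 } if d_k ≠ 0, and t_k = 0 if d_k = 0; (iii) x_{k+1} = x_k + t_k·d_k; (iv) f(x_{k+1}) ≤ f(x_k) + t_k·⟨∇f(x_k),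 d_k⟩ + (Λ_k/2)·t_k²·‖d_k‖². Then for every N ∈ ℕ, min_{0 ≤ k ≤ N} Gap_k ≤ √( 2·Ĉ·(f(x_0) - f*)/(N+1) ). -/
open scoped RealInnerProductSpace

/-! Both the gap `⟨∇f(x_k), x_k - v_k⟩ ≤ G·D` and the curvature term `Λ_k ‖d_k‖² ≤ M·D²` are at
most `Ĉ`, so whether the adaptive step is `Gap_k / (Λ_k ‖d_k‖²)` or is capped at `1`, the sufficient
decrease condition makes `f` drop by at least `Gap_k² / (2Ĉ)`. Telescoping bounds the sum of the
squared gaps by `2Ĉ (f(x_0) - f*)`, and the smallest gap is at most the root mean square. The bound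
`⟨y, s⟩ ≤ ‖y‖_* ‖s‖` requires the supremum defining `‖y‖_*` to be finite, which is where the
equivalence of norms on `ℝⁿ` enters. -/

-- Being convex, `p` is continuous, so it attains a positive minimum on the unit sphere.
theorem Seminorm.exists_pos_mul_norm_le {E : Type*} [NormedAddCommGroup E] [NormedSpace ℝ E]
    [FiniteDimensional ℝ E] (p : Seminorm ℝ E) (hp : ∀ x, p x = 0 → x = 0) :
    ∃ m > 0, ∀ x, m * ‖x‖ ≤ p x := by
  rcases subsingleton_or_nontrivial E with hE | hE
  · exact ⟨1, one_pos, fun x => by simp [Subsingleton.elim x 0]⟩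
  have hcont : Continuous p := continuousOn_univ.mp (p.convexOn.continuousOn isOpen_univ)
  obtain ⟨s₀, hs₀, hmin⟩ := (isCompact_sphere (0 : E) 1).exists_isMinOn
    (NormedSpace.sphere_nonempty.mpr zero_le_one) hcont.continuousOn
  have hs₀_ne : s₀ ≠ 0 := ne_zero_of_mem_unit_sphere ⟨s₀, hs₀⟩
  refine ⟨p s₀, (apply_nonneg p s₀).lt_of_ne fun h => hs₀_ne (hp s₀ h.symm), fun x => ?_⟩
  rcases eq_or_ne x 0 with rfl | hx
  · simp
  have hx_pos : 0 < ‖x‖ := norm_pos_iff.mpr hx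
  have hunit : ‖x‖⁻¹ • x ∈ Metric.sphere (0 : E) 1 := by
    rw [mem_sphere_zero_iff_norm, norm_smul, norm_inv, norm_norm, inv_mul_cancel₀ hx_pos.ne']
  have hle : p s₀ ≤ ‖x‖⁻¹ * p x := by
    simpa [map_smul_eq_mul, abs_of_pos hx_pos] using hmin hunit
  calc p s₀ * ‖x‖ ≤ ‖x‖⁻¹ * p x * ‖x‖ := by gcongr
    _ = p x := by field_simp

theorem inner_le_dualNorm_mul {n : ℕ} (p : Seminorm ℝ (EuclideanSpace ℝ (Fin n)))
    (hp : ∀ x, p x = 0 → x = 0) (y s : EuclideanSpace ℝ (Fin n)) :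
    ⟪y, s⟫ ≤ dualNorm p y * p s := by
  obtain ⟨m, hm, hmp⟩ := p.exists_pos_mul_norm_le hp
  have hbdd : BddAbove {r : ℝ | ∃ s, p s ≤ 1 ∧ r = ⟪y, s⟫} := by
    refine ⟨‖y‖ / m, ?_⟩
    rintro _ ⟨s, hs, rfl⟩
    calc ⟪y, s⟫ ≤ ‖y‖ * ‖s‖ := real_inner_le_norm y s
      _ ≤ ‖y‖ * (1 / m) := by
          gcongr
          rw [le_div_iff₀ hm]
          linarith [hmp s]
      _ = ‖y‖ / m := by ring
  rcases (apply_nonneg p s).eq_or_lt with hs | hs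
  · simp [hp s hs.symm]
  have hunit : ⟪y, (p s)⁻¹ • s⟫ ≤ dualNorm p y :=
    le_csSup hbdd ⟨(p s)⁻¹ • s, by
      rw [map_smul_eq_mul, Real.norm_eq_abs, abs_inv, abs_of_pos hs, inv_mul_cancel₀ hs.ne'],
      rfl⟩
  rw [inner_smul_right] at hunit
  calc ⟪y, s⟫ = (p s)⁻¹ * ⟪y, s⟫ * p s := by field_simp
    _ ≤ dualNorm p y * p s := by gcongr

theorem sq_le_of_adaptive_step {a b c t f₀ f₁ : ℝ} (ha : 0 ≤ a) (hac : a ≤ c) (hb : 0 < b)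
    (hbc : b ≤ c) (ht : t = min (a / b) 1) (hdec : f₁ ≤ f₀ - t * a + b / 2 * t ^ 2) :
    a ^ 2 ≤ 2 * c * (f₀ - f₁) := by
  have hprogress : a ^ 2 ≤ 2 * c * (t * a - b / 2 * t ^ 2) := by
    rcases le_or_gt a b with hab | hab
    · rw [ht, min_eq_left ((div_le_one hb).mpr hab)]
      have hval : a / b * a - b / 2 * (a / b) ^ 2 = a ^ 2 / (2 * b) := by field_simp; ring
      rw [hval, mul_div_assoc', le_div_iff₀ (by positivity)]
      nlinarith [sq_nonneg a]
    · rw [ht, min_eq_right ((one_le_div hb).mpr hab.le)]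
      nlinarith
  nlinarith

theorem exists_le_sqrt_of_sq_le_mul_sub {g F : ℕ → ℝ} {c F₀ : ℝ} (hc : 0 ≤ c)
    (hg : ∀ k, 0 ≤ g k) (hF : ∀ k, F₀ ≤ F k) (hdesc : ∀ k, g k ^ 2 ≤ c * (F k - F (k + 1)))
    (N : ℕ) : ∃ k ≤ N, g k ≤ √(c * (F 0 - F₀) / (N + 1)) := by
  obtain ⟨k, hk, hmin⟩ := (Finset.range (N + 1)).exists_min_image g ⟨0, by simp⟩
  refine ⟨k, Nat.lt_succ_iff.mp (Finset.mem_range.mp hk), Real.le_sqrt_of_sq_le ?_⟩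
  have hsum : (N + 1 : ℝ) * g k ^ 2 ≤ c * (F 0 - F (N + 1)) := by
    calc (N + 1 : ℝ) * g k ^ 2 = ∑ _i ∈ Finset.range (N + 1), g k ^ 2 := by simp
      _ ≤ ∑ i ∈ Finset.range (N + 1), g i ^ 2 :=
          Finset.sum_le_sum fun i hi => pow_le_pow_left₀ (hg k) (hmin i hi) 2
      _ ≤ ∑ i ∈ Finset.range (N + 1), c * (F i - F (i + 1)) := Finset.sum_le_sum fun i _ => hdesc i
      _ = c * (F 0 - F (N + 1)) := by rw [← Finset.mul_sum, Finset.sum_range_sub']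
  rw [le_div_iff₀ (by positivity)]
  nlinarith [hF (N + 1)]

theorem acgd_constrained_nonconvex_rate_general {n : ℕ}
    (nrm : EuclideanSpace ℝ (Fin n) → ℝ)
    (hnrm_add : ∀ u v, nrm (u + v) ≤ nrm u + nrm v)
    (hnrm_smul : ∀ (a : ℝ) (u : EuclideanSpace ℝ (Fin n)), nrm (a • u) = |a| * nrm u)
    (hnrm_eq0 : ∀ u, nrm u = 0 ↔ u = 0)
    (C : Set (EuclideanSpace ℝ (Fin n)))
    (D : ℝ) (hD : IsGreatest {r : ℝ | ∃ a ∈ C, ∃ b ∈ C, r = nrm (a - b)} D)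
    (f : EuclideanSpace ℝ (Fin n) → ℝ)
    (f' : EuclideanSpace ℝ (Fin n) → EuclideanSpace ℝ (Fin n))
    (fstar : ℝ) (hfstar : IsLeast (f '' C) fstar)
    (G : ℝ) (hG : IsGreatest ((fun z => dualNorm nrm (f' z)) '' C) G)
    (M : ℝ)
    (Chat : ℝ) (hChat : Chat = max M (max 1 G) * (max D 1) ^ 2)
    (x v : ℕ → EuclideanSpace ℝ (Fin n)) (t Λ : ℕ → ℝ)
    (hxC : ∀ k, x k ∈ C) (hvC : ∀ k, v k ∈ C)
    (hlmo : ∀ k, ∀ u ∈ C, ⟪f' (x k), v k⟫ ≤ ⟪f' (x k), u⟫)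
    (hΛ : ∀ k, 0 < Λ k ∧ Λ k ≤ M)
    (ht : ∀ k, v k - x k ≠ 0 →
      t k = min (⟪f' (x k), x k - v k⟫ / (Λ k * nrm (v k - x k) ^ 2)) 1)
    (ht0 : ∀ k, v k - x k = 0 → t k = 0)
    (hdec : ∀ k, f (x (k + 1)) ≤
      f (x k) + t k * ⟪f' (x k), v k - x k⟫ + Λ k / 2 * t k ^ 2 * nrm (v k - x k) ^ 2) :
    ∀ N : ℕ, ∃ k ≤ N,
      ⟪f' (x k), x k - v k⟫ ≤ Real.sqrt (2 * Chat * (f (x 0) - fstar) / ((N : ℝ) + 1)) := by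
  let p : Seminorm ℝ (EuclideanSpace ℝ (Fin n)) := Seminorm.of nrm hnrm_add hnrm_smul
  have hp : ∀ u, p u = 0 → u = 0 := fun u => (hnrm_eq0 u).mp
  set A := max M (max 1 G)
  set B := max D 1
  have hdiam : ∀ k, nrm (x k - v k) ≤ B ∧ nrm (v k - x k) ≤ B := fun k =>
    ⟨(hD.2 ⟨x k, hxC k, v k, hvC k, rfl⟩).trans (le_max_left D 1),
      (hD.2 ⟨v k, hvC k, x k, hxC k, rfl⟩).trans (le_max_left D 1)⟩
  have hChat_nonneg : 0 ≤ Chat := by rw [hChat]; positivity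
  have hgap_nonneg : ∀ k, 0 ≤ ⟪f' (x k), x k - v k⟫ := fun k => by
    rw [inner_sub_right]
    linarith [hlmo k (x k) (hxC k)]
  have hgap_le : ∀ k, ⟪f' (x k), x k - v k⟫ ≤ Chat := fun k => by
    have hdual : dualNorm nrm (f' (x k)) ≤ A :=
      (hG.2 ⟨x k, hxC k, rfl⟩).trans ((le_max_right 1 G).trans (le_max_right M _))
    calc ⟪f' (x k), x k - v k⟫ ≤ dualNorm p (f' (x k)) * p (x k - v k) :=
          inner_le_dualNorm_mul p hp _ _
      _ ≤ A * B := by gcongr; exacts [hdual, (hdiam k).1]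
      _ ≤ A * B ^ 2 := by gcongr; nlinarith [le_max_right D 1]
      _ = Chat := hChat.symm
  have hcurv_le : ∀ k, Λ k * nrm (v k - x k) ^ 2 ≤ Chat := fun k => by
    rw [hChat]
    gcongr
    exacts [(hΛ k).2.trans (le_max_left _ _), apply_nonneg p _, (hdiam k).2]
  have hstep : ∀ k, ⟪f' (x k), x k - v k⟫ ^ 2 ≤ 2 * Chat * (f (x k) - f (x (k + 1))) := by
    intro k
    rcases eq_or_ne (v k - x k) 0 with hd | hd
    · have hdec0 := hdec k
      rw [ht0 k hd] at hdec0
      norm_num at hdec0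
      rw [← neg_sub, hd, neg_zero, inner_zero_right]
      nlinarith
    · have hdir : ⟪f' (x k), v k - x k⟫ = -⟪f' (x k), x k - v k⟫ := by
        rw [← inner_neg_right, neg_sub]
      refine sq_le_of_adaptive_step (hgap_nonneg k) (hgap_le k) ?_ (hcurv_le k) (ht k hd) ?_
      · exact mul_pos (hΛ k).1 (pow_pos ((apply_nonneg p _).lt_of_ne fun h => hd (hp _ h.symm)) 2)
      · exact (hdec k).trans_eq (by rw [hdir]; ring)
  exact exists_le_sqrt_of_sq_le_mul_sub (by positivity) hgap_nonneg
    (fun k => hfstar.2 ⟨x k, hxC k, rfl⟩) hstep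

/-- Constrained non-convex convergence rate of Adaptive Conditional
Gradient Descent (Frank–Wolfe variant): with `Ĉ = max{M,1,G}·(max{D,1})²`,
`min_{0 ≤ k ≤ N} Gap_k ≤ √(2·Ĉ·(f(x_0)-f*)/(N+1))`, where
`Gap_k = ⟨∇f(x_k), x_k - v_k⟩` is the Frank–Wolfe gap. -/
theorem acgd_constrained_nonconvex_rate {n : ℕ}
    (nrm : EuclideanSpace ℝ (Fin n) → ℝ)
    (hnrm_add : ∀ u v, nrm (u + v) ≤ nrm u + nrm v)
    (hnrm_smul : ∀ (a : ℝ) (u : EuclideanSpace ℝ (Fin n)), nrm (a • u) = |a| * nrm u)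
    (hnrm_eq0 : ∀ u, nrm u = 0 ↔ u = 0)
    (C : Set (EuclideanSpace ℝ (Fin n)))
    (hCne : C.Nonempty) (hCcomp : IsCompact C) (hCconv : Convex ℝ C)
    (D : ℝ) (hD : IsGreatest {r : ℝ | ∃ a ∈ C, ∃ b ∈ C, r = nrm (a - b)} D)
    (f : EuclideanSpace ℝ (Fin n) → ℝ)
    (f' : EuclideanSpace ℝ (Fin n) → EuclideanSpace ℝ (Fin n))
    (hf : ∀ y, HasGradientAt f (f' y) y) (hf' : Continuous f')
    (fstar : ℝ) (hfstar : IsLeast (f '' C) fstar)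
    (G : ℝ) (hG : IsGreatest ((fun z => dualNorm nrm (f' z)) '' C) G)
    (M : ℝ) (hM : 0 < M)
    (Chat : ℝ) (hChat : Chat = max M (max 1 G) * (max D 1) ^ 2)
    (x v : ℕ → EuclideanSpace ℝ (Fin n)) (t Λ : ℕ → ℝ)
    (hxC : ∀ k, x k ∈ C) (hvC : ∀ k, v k ∈ C)
    (hlmo : ∀ k, ∀ u ∈ C, ⟪f' (x k), v k⟫ ≤ ⟪f' (x k), u⟫)
    (hΛ : ∀ k, 0 < Λ k ∧ Λ k ≤ M)
    (ht : ∀ k, v k - x k ≠ 0 →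
      t k = min (⟪f' (x k), x k - v k⟫ / (Λ k * nrm (v k - x k) ^ 2)) 1)
    (ht0 : ∀ k, v k - x k = 0 → t k = 0)
    (hx : ∀ k, x (k + 1) = x k + t k • (v k - x k))
    (hdec : ∀ k, f (x (k + 1)) ≤
      f (x k) + t k * ⟪f' (x k), v k - x k⟫ + Λ k / 2 * t k ^ 2 * nrm (v k - x k) ^ 2) :
    ∀ N : ℕ, ∃ k ≤ N,
      ⟪f' (x k), x k - v k⟫ ≤ Real.sqrt (2 * Chat * (f (x 0) - fstar) / ((N : ℝ) + 1)) :=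
  acgd_constrained_nonconvex_rate_general nrm hnrm_add hnrm_smul hnrm_eq0 C D hD f f' fstar hfstar G
    hG M Chat hChat x v t Λ hxC hvC hlmo hΛ ht ht0 hdec
end

section
/- Let E be a real normed space, f : E → ℝ a function, x, d ∈ E with d ≠ 0, and g : E → ℝ a continuous linear functional with G := -g(d) ≥ 0. Let Λ > 0, set t := min{ G/(Λ‖d‖²), 1 }, and assume the sufficient decrease inequality f(x + t·d) ≤ f(x) + t·g(d) + (Λ/2)·t²·‖d‖² holds. Then min{ G/2, G²/(2Λ‖d‖²) } ≤ f(x) - f(x + t·d). -/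
/-! The sufficient decrease inequality bounds the progress from below by the model decrease
`t G - (Λ/2) t² ‖d‖²`. For `t = G/(Λ‖d‖²)` this is exactly `G²/(2Λ‖d‖²)`; the step is capped
at `t = 1` only when `Λ‖d‖² ≤ G`, and then the model decrease is at least `G/2`. -/

theorem min_le_capped_step_model_decrease (G a : ℝ) (ha : 0 < a) :
    min (G / 2) (G ^ 2 / (2 * a)) ≤
      min (G / a) 1 * G - a / 2 * min (G / a) 1 ^ 2 := by
  rcases le_total (G / a) 1 with h | h
  · have hmodel : G / a * G - a / 2 * (G / a) ^ 2 = G ^ 2 / (2 * a) := by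
      field_simp
      ring
    rw [min_eq_left h, hmodel]
    exact min_le_right _ _
  · have haG : a ≤ G := (one_le_div ha).mp h
    rw [min_eq_right h]
    exact (min_le_left _ _).trans (by linarith)

theorem adaptive_step_constrained_progress_general
    {E : Type*} [NormedAddCommGroup E] [NormedSpace ℝ E]
    (f : E → ℝ) (x d : E) (hd : d ≠ 0)
    (g : E →L[ℝ] ℝ) (G : ℝ) (hG : G = -(g d))
    (Λ : ℝ) (hΛ : 0 < Λ)
    (t : ℝ) (ht : t = min (G / (Λ * ‖d‖ ^ 2)) 1)
    (hdec : f (x + t • d) ≤ f x + t * g d + Λ / 2 * t ^ 2 * ‖d‖ ^ 2) :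
    min (G / 2) (G ^ 2 / (2 * Λ * ‖d‖ ^ 2)) ≤ f x - f (x + t • d) := by
  have hd' : 0 < ‖d‖ := norm_pos_iff.mpr hd
  have hmodel := min_le_capped_step_model_decrease G (Λ * ‖d‖ ^ 2) (by positivity)
  rw [← ht, ← mul_assoc] at hmodel
  linear_combination hmodel + hdec + t * hG

/-- Per-iteration progress bound for the constrained variant:
with `G = -g d ≥ 0`, `t = min (G/(Λ‖d‖²)) 1` and the sufficient decrease inequality,
one has `min (G/2) (G²/(2Λ‖d‖²)) ≤ f x - f (x + t • d)`. -/
theorem adaptive_step_constrained_progress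
    {E : Type*} [NormedAddCommGroup E] [NormedSpace ℝ E]
    (f : E → ℝ) (x d : E) (hd : d ≠ 0)
    (g : E →L[ℝ] ℝ) (G : ℝ) (hG : G = -(g d)) (hGnonneg : 0 ≤ G)
    (Λ : ℝ) (hΛ : 0 < Λ)
    (t : ℝ) (ht : t = min (G / (Λ * ‖d‖ ^ 2)) 1)
    (hdec : f (x + t • d) ≤ f x + t * g d + Λ / 2 * t ^ 2 * ‖d‖ ^ 2) :
    min (G / 2) (G ^ 2 / (2 * Λ * ‖d‖ ^ 2)) ≤ f x - f (x + t • d) :=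
  adaptive_step_constrained_progress_general f x d hd g G hG Λ hΛ t ht hdec
end

section
/- Let f : ℝ^n → ℝ be differentiable, let C ⊆ ℝ^n be a nonempty compact convex set, let x* ∈ C be a global minimizer of f over ℝ^n, and assume f is η-quasar-convex with respect to x* for some η ∈ (0,1], i.e., f(x*) - f(y) ≥ (1/η)·⟨∇f(y), x* - y⟩ for all y ∈ ℝ^n. Then for every x ∈ C and every v ∈ C minimizing u ↦ ⟨∇f(x), u⟩ over C, it holds that ⟨∇f(x), v - x⟩ ≤ -η·(f(x) - f(x*)). -/
open scoped RealInnerProductSpace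

/-- For an `η`-quasar-convex differentiable `f` with global
minimizer `x* ∈ C`, the linearization decrease along the Frank–Wolfe direction
`v - x` is at least `η` times the functional-value gap:
`⟨∇f(x), v - x⟩ ≤ -η·(f x - f x*)`. -/
theorem fw_direction_quasar_decrease {n : ℕ}
    (f : EuclideanSpace ℝ (Fin n) → ℝ)
    (f' : EuclideanSpace ℝ (Fin n) → EuclideanSpace ℝ (Fin n))
    (hf : ∀ y, HasGradientAt f (f' y) y)
    (C : Set (EuclideanSpace ℝ (Fin n)))
    (hCne : C.Nonempty) (hCcomp : IsCompact C) (hCconv : Convex ℝ C)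
    (xstar : EuclideanSpace ℝ (Fin n)) (hxstarC : xstar ∈ C)
    (hmin : ∀ y, f xstar ≤ f y)
    (η : ℝ) (hη : η ∈ Set.Ioc (0 : ℝ) 1)
    (hquasar : ∀ y, f xstar - f y ≥ (1 / η) * ⟪f' y, xstar - y⟫)
    (x : EuclideanSpace ℝ (Fin n)) (hx : x ∈ C)
    (v : EuclideanSpace ℝ (Fin n)) (hv : v ∈ C)
    (hvmin : ∀ u ∈ C, ⟪f' x, v⟫ ≤ ⟪f' x, u⟫) :
    ⟪f' x, v - x⟫ ≤ -η * (f x - f xstar) := by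
  have hq := hquasar x
  have hηpos := hη.1
  have h1 : ⟪f' x, xstar - x⟫ ≤ η * (f xstar - f x) := by
    rw [ge_iff_le, div_mul_eq_mul_div, one_mul, div_le_iff₀ hηpos] at hq
    linarith [mul_comm (f xstar - f x) η]
  have h2 : ⟪f' x, v - x⟫ ≤ ⟪f' x, xstar - x⟫ := by
    rw [inner_sub_right, inner_sub_right]
    have := hvmin xstar hxstarC
    linarith
  nlinarith
end
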